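/- Let C be a regular category with enough projectives whose projectives are closed under finite limits. Then the ex/reg-completion of C is equivalent to the ex/lex-completion of the full subcategory Proj(C) of projective objects of C. -/

import Mathlib

/-!
An exact category `D` in which a full subcategory `P` consists of projectives covering every
object is determined by `P`: every object of `D` is the quotient of a span `t₀, t₁ : T ⟶ A` in `P`
which is a pseudo-equivalence relation on each `Hom(B, A)`, a morphism of quotients lifts to a
map `A ⟶ A'` of `P`, two lifts agree on the quotient exactly when they are related by the span of
the target, and, by exactness, every pseudo-equivalence relation in `P` has a quotient. So sending
an object to the quotient in another such category of the span presenting it is an equivalence.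
Both completions are of this kind for `P = Proj(C)`: in the ex/reg-completion a projective of `C`
stays projective because `y` reflects covers, and `y` of a projective cover is a cover.
-/

open CategoryTheory CategoryTheory.Limits

universe v u v₂ u₂ v₃ u₃

/-- A morphism is a cover if the only subobject of its codomain through which
it factors is the maximal one. -/
def IsCover {C : Type u} [Category.{v} C] {X Y : C} (f : Y ⟶ X) : Prop :=
  ∀ ⦃Z : C⦄ (m : Z ⟶ X) (g : Y ⟶ Z), Mono m → g ≫ m = f → IsIso m

/-- An object is projective (w.r.t. covers) if every cover onto it splits. -/
def CovProjective {C : Type u} [Category.{v} C] (P : C) : Prop :=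
  ∀ ⦃X : C⦄ (q : X ⟶ P), IsCover q → ∃ s : P ⟶ X, s ≫ q = 𝟙 P

/-- A category has enough projectives if every object is covered by a projective. -/
def HasEnoughCovProjectives (C : Type u) [Category.{v} C] : Prop :=
  ∀ X : C, ∃ (P : C) (q : P ⟶ X), CovProjective P ∧ IsCover q

/-- A regular category: finite limits, cover-mono factorizations,
and covers stable under pullback. -/
class RegularCat (C : Type u) [Category.{v} C] extends HasFiniteLimits C : Prop where
  factor : ∀ {X Y : C} (f : X ⟶ Y), ∃ (Z : C) (e : X ⟶ Z) (m : Z ⟶ Y),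
    IsCover e ∧ Mono m ∧ e ≫ m = f
  pullback_cover : ∀ {X Y Z L : C} (f : X ⟶ Y) (g : Z ⟶ Y)
    (p₁ : L ⟶ X) (p₂ : L ⟶ Z), IsPullback p₁ p₂ f g → IsCover f → IsCover p₂
section Exactness

variable {C : Type u} [Category.{v} C]

/-- The relation on generalized elements induced by a relation r : R ⟶ X ⨯ X. -/
def relOf [HasFiniteLimits C] {R X : C} (r : R ⟶ X ⨯ X) {A : C} (x y : A ⟶ X) : Prop :=
  ∃ a : A ⟶ R, a ≫ r = prod.lift x y

/-- r : R ⟶ X ⨯ X is an equivalence relation: it is a subobject of X ⨯ X and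
induces an equivalence relation on every hom-set Hom(A, X). -/
structure IsEquivRel [HasFiniteLimits C] {R X : C} (r : R ⟶ X ⨯ X) : Prop where
  mono : Mono r
  iseqv : ∀ A : C, Equivalence (fun x y : A ⟶ X => relOf r x y)

/-- The fork r₀, r₁ ⇉ X → Q is exact: it is both a pullback and a coequalizer. -/
structure IsExactFork {R X Q : C} (r₀ r₁ : R ⟶ X) (q : X ⟶ Q) : Prop where
  w : r₀ ≫ q = r₁ ≫ q
  isPullback : IsPullback r₀ r₁ q q
  isCoequalizer : Nonempty (IsColimit (Cofork.ofπ q w))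

/-- The fork is stably exact: it is exact and remains exact after pullback
along any map P ⟶ Q. -/
def IsStablyExactFork [HasFiniteLimits C] {R X Q : C} (r₀ r₁ : R ⟶ X) (q : X ⟶ Q) : Prop :=
  ∃ w : r₀ ≫ q = r₁ ≫ q, Nonempty (IsColimit (Cofork.ofπ q w)) ∧ IsPullback r₀ r₁ q q ∧
    ∀ {P : C} (p : P ⟶ Q),
      IsExactFork
        (pullback.lift (pullback.fst (r₀ ≫ q) p ≫ r₀) (pullback.snd (r₀ ≫ q) p)
          (by simpa using pullback.condition) :
            pullback (r₀ ≫ q) p ⟶ pullback q p)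
        (pullback.lift (pullback.fst (r₀ ≫ q) p ≫ r₁) (pullback.snd (r₀ ≫ q) p)
          (by rw [Category.assoc, ← w]; simpa using pullback.condition))
        (pullback.snd q p)

/-- An exact category: regular, and every equivalence relation fits into a
stably exact fork. -/
class ExactCat (C : Type u) [Category.{v} C] extends RegularCat C : Prop where
  exact_quotient : ∀ {R X : C} (r : R ⟶ X ⨯ X), IsEquivRel r →
    ∃ (Q : C) (q : X ⟶ Q), IsStablyExactFork (r ≫ prod.fst) (r ≫ prod.snd) q

end Exactness

section Covers

variable {C : Type u} [Category.{v} C]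

theorem IsCover.isIso {X Y : C} {f : Y ⟶ X} (hf : IsCover f) [Mono f] : IsIso f :=
  hf f (𝟙 Y) inferInstance (Category.id_comp f)

theorem IsCover.of_comp {X Y Z : C} {e : X ⟶ Y} {f : Y ⟶ Z} (h : IsCover (e ≫ f)) :
    IsCover f := fun _ m g hm hgm => h m (e ≫ g) hm (by rw [Category.assoc, hgm])

theorem IsCover.comp_isIso {X Y Z : C} {f : Y ⟶ X} (hf : IsCover f) (i : X ⟶ Z) [IsIso i] :
    IsCover (f ≫ i) := by
  intro W m g hm hgm
  have : IsIso (m ≫ inv i) := hf (m ≫ inv i) g (mono_comp m (inv i)) (by simp [reassoc_of% hgm])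
  simpa using (inferInstance : IsIso ((m ≫ inv i) ≫ i))

theorem IsCover.epi [HasEqualizers C] {X Y : C} {f : Y ⟶ X} (hf : IsCover f) : Epi f := by
  refine ⟨fun a b hab => ?_⟩
  have : IsIso (equalizer.ι a b) :=
    hf (equalizer.ι a b) (equalizer.lift f hab) inferInstance (equalizer.lift_ι f hab)
  rw [← cancel_epi (equalizer.ι a b), equalizer.condition]

theorem IsCover.comp [HasPullbacks C] {X Y Z : C} {e : X ⟶ Y} {f : Y ⟶ Z}
    (he : IsCover e) (hf : IsCover f) : IsCover (e ≫ f) := by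
  intro W m g hm hgm
  have : IsIso (pullback.snd m f) :=
    he _ (pullback.lift g e (by rw [hgm])) inferInstance (pullback.lift_snd _ _ _)
  refine hf m (inv (pullback.snd m f) ≫ pullback.fst m f) hm ?_
  rw [Category.assoc, pullback.condition, IsIso.inv_hom_id_assoc]

theorem IsCover.exists_lift_of_mono [HasPullbacks C] {A' A S B : C} {c : A' ⟶ A}
    (hc : IsCover c) (m : S ⟶ B) [Mono m] (h : A ⟶ B) (g : A' ⟶ S) (hfac : c ≫ h = g ≫ m) :
    ∃ k : A ⟶ S, k ≫ m = h := by
  have : IsIso (pullback.snd m h) :=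
    hc _ (pullback.lift g c hfac.symm) inferInstance (pullback.lift_snd _ _ _)
  exact ⟨inv (pullback.snd m h) ≫ pullback.fst m h, by
    rw [Category.assoc, pullback.condition, IsIso.inv_hom_id_assoc]⟩

theorem isCover_of_isColimit_cofork {A B Q : C} {a b : A ⟶ B} {q : B ⟶ Q} {w : a ≫ q = b ≫ q}
    (h : IsColimit (Cofork.ofπ q w)) : IsCover q := by
  intro Z m g hm hgm
  have : Epi q := ⟨fun x y hxy => Cofork.IsColimit.hom_ext h hxy⟩
  obtain ⟨d, hd⟩ := Cofork.IsColimit.desc' h g (by rw [← cancel_mono m]; simp [hgm, w])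
  have hdm : d ≫ m = 𝟙 Q := by
    rw [← cancel_epi q, ← Category.assoc]
    exact (congrArg (· ≫ m) hd).trans (hgm.trans (Category.comp_id q).symm)
  have : IsSplitEpi m := ⟨⟨⟨d, hdm⟩⟩⟩
  exact isIso_of_mono_of_isSplitEpi m

theorem IsCover.exists_cover_lift [RegularCat C] {X Y Z : C} {q : X ⟶ Y} (hq : IsCover q)
    (a : Z ⟶ Y) : ∃ (Z' : C) (k : Z' ⟶ Z) (j : Z' ⟶ X), IsCover k ∧ j ≫ q = k ≫ a :=
  ⟨_, pullback.snd q a, pullback.fst q a,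
    RegularCat.pullback_cover q a _ _ (IsPullback.of_hasPullback q a) hq, pullback.condition⟩

theorem CovProjective.lift [RegularCat C] {P Z W : C} (hP : CovProjective P)
    {c : Z ⟶ W} (hc : IsCover c) (g : P ⟶ W) : ∃ l : P ⟶ Z, l ≫ c = g := by
  obtain ⟨P', k, j, hk, hjk⟩ := hc.exists_cover_lift g
  obtain ⟨s, hs⟩ := hP k hk
  exact ⟨s ≫ j, by rw [Category.assoc, hjk, reassoc_of% hs]⟩

/-- Given `a ≫ u = b ≫ u`, lift `a` and `b` through `e` after covering their domain twice. -/
theorem IsCover.mono_of_comp [RegularCat C] {X I Y : C} {e : X ⟶ I} (he : IsCover e) (u : I ⟶ Y)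
    (h : ∀ {W : C} (x y : W ⟶ X), x ≫ e ≫ u = y ≫ e ≫ u → x ≫ e = y ≫ e) : Mono u := by
  refine ⟨fun {Z} a b hab => ?_⟩
  obtain ⟨Z₁, k₁, j₁, hk₁, hj₁⟩ := he.exists_cover_lift a
  obtain ⟨Z₂, k₂, j₂, hk₂, hj₂⟩ := he.exists_cover_lift (k₁ ≫ b)
  have : Epi (k₂ ≫ k₁) := (hk₂.comp hk₁).epi
  have key := h (k₂ ≫ j₁) j₂ (by simp only [Category.assoc, reassoc_of% hj₁, reassoc_of% hj₂, hab])
  simp only [Category.assoc, hj₁, hj₂] at key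
  exact (cancel_epi (k₂ ≫ k₁)).1 (by simpa only [Category.assoc] using key)

/-- Covers are effective: factor `(q, h)` as a cover followed by a mono and show that the first
component of the mono is an isomorphism. -/
theorem IsCover.desc [RegularCat C] {X Y W : C} {q : X ⟶ Y} (hq : IsCover q) (h : X ⟶ W)
    (hh : ∀ {V : C} (x y : V ⟶ X), x ≫ q = y ≫ q → x ≫ h = y ≫ h) :
    ∃ d : Y ⟶ W, q ≫ d = h := by
  obtain ⟨I, e, m, he, hm, hfac⟩ := RegularCat.factor (prod.lift q h)
  have hq' : e ≫ m ≫ prod.fst = q := by rw [reassoc_of% hfac, prod.lift_fst]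
  have hh' : e ≫ m ≫ prod.snd = h := by rw [reassoc_of% hfac, prod.lift_snd]
  have : Mono (m ≫ prod.fst) := he.mono_of_comp _ fun x y hxy => by
    rw [← cancel_mono m]
    simp only [Category.assoc, hfac]
    rw [hq'] at hxy
    ext <;> simp [hxy, hh x y hxy]
  have : IsIso (m ≫ prod.fst) := (IsCover.of_comp (hq' ▸ hq : IsCover (e ≫ m ≫ prod.fst))).isIso
  exact ⟨inv (m ≫ prod.fst) ≫ m ≫ prod.snd, by
    rw [← hq', Category.assoc, IsIso.hom_inv_id_assoc, hh']⟩

theorem isCover_of_isCover_map {D : Type u₂} [Category.{v₂} D] [RegularCat C] (F : C ⥤ D)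
    [F.PreservesMonomorphisms] [F.ReflectsIsomorphisms] {X Y : C} (f : X ⟶ Y)
    (hf : IsCover (F.map f)) : IsCover f := by
  obtain ⟨I, e, m, he, hm, rfl⟩ := RegularCat.factor f
  have : IsIso (F.map m) := hf (F.map m) (F.map e) inferInstance (F.map_comp e m).symm
  have : IsIso m := isIso_of_reflects_iso m F
  exact he.comp_isIso m

theorem CovProjective.map {D : Type u₂} [Category.{v₂} D] [RegularCat C] [HasPullbacks D]
    (F : C ⥤ D) [F.Full] [F.Faithful] [F.PreservesMonomorphisms]
    (hF : ∀ Z : D, ∃ (A : C) (c : F.obj A ⟶ Z), IsCover c) {A : C} (hA : CovProjective A) :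
    CovProjective (F.obj A) := by
  intro X c hc
  obtain ⟨B, d, hd⟩ := hF X
  obtain ⟨f, hf⟩ := F.map_surjective (d ≫ c)
  obtain ⟨s, hs⟩ := hA f (isCover_of_isCover_map F f (hf ▸ hd.comp hc))
  exact ⟨F.map s ≫ d, by rw [Category.assoc, ← hf, ← F.map_comp, hs, F.map_id]⟩

end Covers

section Relations

variable {C : Type u} [Category.{v} C] [HasFiniteLimits C]

theorem relOf_iff_of_isPullback {R X Q W : C} {r : R ⟶ X ⨯ X} {q : X ⟶ Q}
    (hpb : IsPullback (r ≫ prod.fst) (r ≫ prod.snd) q q) (x y : W ⟶ X) :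
    relOf r x y ↔ x ≫ q = y ≫ q := by
  constructor
  · rintro ⟨a, ha⟩
    have h₀ : a ≫ r ≫ prod.fst = x := by rw [reassoc_of% ha, prod.lift_fst]
    have h₁ : a ≫ r ≫ prod.snd = y := by rw [reassoc_of% ha, prod.lift_snd]
    rw [← h₀, ← h₁]
    simpa using congrArg (a ≫ ·) hpb.w
  · intro hxy
    refine ⟨hpb.lift x y hxy, ?_⟩
    ext <;> simp only [Category.assoc, hpb.lift_fst, hpb.lift_snd, prod.lift_fst, prod.lift_snd]

theorem relOf_iff_relOf_comp {R X W V : C} {r : R ⟶ X ⨯ X} [Mono r] {c : V ⟶ W}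
    (hc : IsCover c) (x y : W ⟶ X) : relOf r x y ↔ relOf r (c ≫ x) (c ≫ y) := by
  constructor
  · rintro ⟨a, ha⟩
    exact ⟨c ≫ a, by rw [Category.assoc, ha, prod.comp_lift]⟩
  · rintro ⟨a, ha⟩
    exact hc.exists_lift_of_mono r (prod.lift x y) a (by rw [prod.comp_lift, ha])

end Relations

def spanRel {P : Type*} [Category P] {A T : P} (t₀ t₁ : T ⟶ A) (B : P) (u v : B ⟶ A) : Prop :=
  ∃ h : B ⟶ T, h ≫ t₀ = u ∧ h ≫ t₁ = v

namespace CategoryTheory.Functor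

structure IsProjectiveCovering {P D : Type*} [Category P] [Category D] (z : P ⥤ D) : Prop where
  covProjective_obj : ∀ A : P, CovProjective (z.obj A)
  exists_cover : ∀ X : D, ∃ (A : P) (c : z.obj A ⟶ X), IsCover c

theorem IsProjectiveCovering.exists_map_comp_eq {P D : Type*} [Category P] [Category D]
    [RegularCat D] {z : P ⥤ D} [z.Full] (hz : z.IsProjectiveCovering) {A B : P} {Y : D}
    {c : z.obj B ⟶ Y} (hc : IsCover c) (a : z.obj A ⟶ Y) : ∃ g : A ⟶ B, z.map g ≫ c = a := by
  obtain ⟨l, hl⟩ := (hz.covProjective_obj A).lift hc a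
  exact ⟨z.preimage l, by rwa [z.map_preimage]⟩

end CategoryTheory.Functor

section Presentation

variable {P : Type*} [Category P] {D : Type*} [Category D]

/-- `q` exhibits `X` as the quotient of the span `t₀, t₁`, as far as maps out of objects of `P`
can tell. -/
structure IsPresentation (z : P ⥤ D) {A T : P} (t₀ t₁ : T ⟶ A) {X : D} (q : z.obj A ⟶ X) :
    Prop where
  isCover : IsCover q
  map_comp_eq_iff : ∀ {B : P} (u v : B ⟶ A), z.map u ≫ q = z.map v ≫ q ↔ spanRel t₀ t₁ B u v

structure Presentation (z : P ⥤ D) (X : D) where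
  A : P
  T : P
  t₀ : T ⟶ A
  t₁ : T ⟶ A
  q : z.obj A ⟶ X
  isPresentation : IsPresentation z t₀ t₁ q

structure PresentedObject (z : P ⥤ D) {A T : P} (t₀ t₁ : T ⟶ A) where
  obj : D
  q : z.obj A ⟶ obj
  isPresentation : IsPresentation z t₀ t₁ q

namespace IsPresentation

variable {z : P ⥤ D} {A T : P} {t₀ t₁ : T ⟶ A} {X : D} {q : z.obj A ⟶ X}

theorem w (hq : IsPresentation z t₀ t₁ q) : z.map t₀ ≫ q = z.map t₁ ≫ q :=
  (hq.map_comp_eq_iff t₀ t₁).2 ⟨𝟙 T, Category.id_comp _, Category.id_comp _⟩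

theorem equivalence (hq : IsPresentation z t₀ t₁ q) (B : P) : Equivalence (spanRel t₀ t₁ B) := by
  have : spanRel t₀ t₁ B = fun u v => z.map u ≫ q = z.map v ≫ q := by
    ext u v
    exact (hq.map_comp_eq_iff u v).symm
  rw [this]
  exact ⟨fun _ => rfl, Eq.symm, Eq.trans⟩

theorem desc [RegularCat D] [z.Full] (hz : z.IsProjectiveCovering)
    (hq : IsPresentation z t₀ t₁ q) {W : D} (h : z.obj A ⟶ W)
    (hw : z.map t₀ ≫ h = z.map t₁ ≫ h) : ∃ d : X ⟶ W, q ≫ d = h := by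
  refine hq.isCover.desc h fun {V} x y hxy => ?_
  obtain ⟨B, c, hc⟩ := hz.exists_cover V
  have : Epi c := hc.epi
  obtain ⟨u, hu⟩ := z.map_surjective (c ≫ x)
  obtain ⟨v, hv⟩ := z.map_surjective (c ≫ y)
  obtain ⟨k, rfl, rfl⟩ := (hq.map_comp_eq_iff u v).1 (by simp [hu, hv, hxy])
  rw [← cancel_epi c, ← Category.assoc, ← Category.assoc, ← hu, ← hv]
  simp only [z.map_comp, Category.assoc, hw]

theorem map_comp_eq_iff_map_comp_eq {D' : Type*} [Category D'] {z' : P ⥤ D'} {X' : D'}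
    {q' : z'.obj A ⟶ X'} (hq : IsPresentation z t₀ t₁ q) (hq' : IsPresentation z' t₀ t₁ q')
    {B : P} (u v : B ⟶ A) : z.map u ≫ q = z.map v ≫ q ↔ z'.map u ≫ q' = z'.map v ≫ q' :=
  (hq.map_comp_eq_iff u v).trans (hq'.map_comp_eq_iff u v).symm

end IsPresentation

variable {z : P ⥤ D} [z.Full] [z.Faithful]

theorem Presentation.nonempty [RegularCat D] (hz : z.IsProjectiveCovering) (X : D) :
    Nonempty (Presentation z X) := by
  obtain ⟨A, q, hq⟩ := hz.exists_cover X
  obtain ⟨T, c, hc⟩ := hz.exists_cover (pullback q q)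
  obtain ⟨t₀, ht₀⟩ := z.map_surjective (c ≫ pullback.fst q q)
  obtain ⟨t₁, ht₁⟩ := z.map_surjective (c ≫ pullback.snd q q)
  refine ⟨⟨A, T, t₀, t₁, q, hq, fun u v => ⟨fun huv => ?_, ?_⟩⟩⟩
  · obtain ⟨h, hh⟩ := hz.exists_map_comp_eq hc (pullback.lift _ _ huv)
    refine ⟨h, z.map_injective ?_, z.map_injective ?_⟩
    · rw [z.map_comp, ht₀, reassoc_of% hh, pullback.lift_fst]
    · rw [z.map_comp, ht₁, reassoc_of% hh, pullback.lift_snd]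
  · rintro ⟨h, rfl, rfl⟩
    simp only [z.map_comp, Category.assoc, ht₀, ht₁, pullback.condition]

section Image

variable [RegularCat D] {A T : P} {t₀ t₁ : T ⟶ A} {R : D}
  {e : z.obj T ⟶ R} {r : R ⟶ z.obj A ⨯ z.obj A}

theorem relOf_map_iff (hz : z.IsProjectiveCovering) (he : IsCover e)
    (hfac : e ≫ r = prod.lift (z.map t₀) (z.map t₁)) {B : P} (u v : B ⟶ A) :
    relOf r (z.map u) (z.map v) ↔ spanRel t₀ t₁ B u v := by
  constructor
  · rintro ⟨a, ha⟩
    obtain ⟨h, hh⟩ := hz.exists_map_comp_eq he a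
    have key : z.map h ≫ e ≫ r = prod.lift (z.map u) (z.map v) := by rw [reassoc_of% hh, ha]
    rw [hfac, prod.comp_lift] at key
    refine ⟨h, z.map_injective ?_, z.map_injective ?_⟩
    · simpa only [z.map_comp, prod.lift_fst] using congrArg (· ≫ prod.fst) key
    · simpa only [z.map_comp, prod.lift_snd] using congrArg (· ≫ prod.snd) key
  · rintro ⟨h, rfl, rfl⟩
    exact ⟨z.map h ≫ e, by rw [Category.assoc, hfac, prod.comp_lift, z.map_comp, z.map_comp]⟩

/-- Over an object `W` covered by `c : z.obj B ⟶ W`, the relation `relOf r` is the inverse image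
of `spanRel t₀ t₁ B` under `x ↦ c ≫ x`. -/
theorem isEquivRel_of_factor (hz : z.IsProjectiveCovering)
    (hrel : ∀ B : P, Equivalence (spanRel t₀ t₁ B)) [Mono r]
    (he : IsCover e) (hfac : e ≫ r = prod.lift (z.map t₀) (z.map t₁)) : IsEquivRel r := by
  refine ⟨inferInstance, fun W => ?_⟩
  obtain ⟨B, c, hc⟩ := hz.exists_cover W
  have key : (fun x y : W ⟶ z.obj A => relOf r x y) =
      fun x y => spanRel t₀ t₁ B (z.preimage (c ≫ x)) (z.preimage (c ≫ y)) := by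
    ext x y
    rw [relOf_iff_relOf_comp hc, ← relOf_map_iff hz he hfac, z.map_preimage, z.map_preimage]
  rw [key]
  exact (hrel B).comap _

end Image

theorem PresentedObject.nonempty [ExactCat D] (hz : z.IsProjectiveCovering) {A T : P}
    (t₀ t₁ : T ⟶ A) (hrel : ∀ B : P, Equivalence (spanRel t₀ t₁ B)) :
    Nonempty (PresentedObject z t₀ t₁) := by
  obtain ⟨R, e, r, he, hr, hfac⟩ := RegularCat.factor (prod.lift (z.map t₀) (z.map t₁))
  obtain ⟨X, q, _, ⟨colim⟩, hpb, -⟩ :=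
    ExactCat.exact_quotient r (isEquivRel_of_factor hz hrel he hfac)
  exact ⟨⟨X, q, isCover_of_isColimit_cofork colim, fun u v =>
    (relOf_iff_of_isPullback hpb _ _).symm.trans (relOf_map_iff hz he hfac u v)⟩⟩

end Presentation

section Transfer

variable {P : Type*} [Category P] {D : Type*} [Category D] {D' : Type*} [Category D']
  {z : P ⥤ D} {z' : P ⥤ D'} {A B E T S : P} {t₀ t₁ : T ⟶ A} {s₀ s₁ : S ⟶ B}
  {X Y Z : D} {X' Y' Z' : D'}

def HaveCommonLift (q : z.obj A ⟶ X) (r : z.obj B ⟶ Y) (q' : z'.obj A ⟶ X')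
    (r' : z'.obj B ⟶ Y') (f : X ⟶ Y) (f' : X' ⟶ Y') : Prop :=
  ∃ g : A ⟶ B, z.map g ≫ r = q ≫ f ∧ z'.map g ≫ r' = q' ≫ f'

namespace HaveCommonLift

variable {q : z.obj A ⟶ X} {r : z.obj B ⟶ Y} {q' : z'.obj A ⟶ X'} {r' : z'.obj B ⟶ Y'}
  {f : X ⟶ Y} {f' : X' ⟶ Y'}

theorem symm (h : HaveCommonLift q r q' r' f f') : HaveCommonLift q' r' q r f' f :=
  let ⟨g, hg, hg'⟩ := h
  ⟨g, hg', hg⟩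

theorem id : HaveCommonLift q q q' q' (𝟙 X) (𝟙 X') :=
  ⟨𝟙 A, by simp, by simp⟩

theorem comp {s : z.obj E ⟶ Z} {s' : z'.obj E ⟶ Z'} {k : Y ⟶ Z} {k' : Y' ⟶ Z'}
    (h : HaveCommonLift q r q' r' f f') (hk : HaveCommonLift r s r' s' k k') :
    HaveCommonLift q s q' s' (f ≫ k) (f' ≫ k') := by
  obtain ⟨g, hg, hg'⟩ := h
  obtain ⟨l, hl, hl'⟩ := hk
  exact ⟨g ≫ l, by rw [z.map_comp, Category.assoc, hl, reassoc_of% hg],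
    by rw [z'.map_comp, Category.assoc, hl', reassoc_of% hg']⟩

theorem eq_iff [HasEqualizers D] [HasEqualizers D'] (hq : IsCover q) (hq' : IsCover q')
    (hr : IsPresentation z s₀ s₁ r) (hr' : IsPresentation z' s₀ s₁ r') {k : X ⟶ Y}
    {k' : X' ⟶ Y'} (h : HaveCommonLift q r q' r' f f') (hk : HaveCommonLift q r q' r' k k') :
    f = k ↔ f' = k' := by
  obtain ⟨g, hg, hg'⟩ := h
  obtain ⟨l, hl, hl'⟩ := hk
  have := hq.epi
  have := hq'.epi
  rw [← cancel_epi q, ← cancel_epi q', ← hg, ← hl, ← hg', ← hl']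
  exact hr.map_comp_eq_iff_map_comp_eq hr' g l

theorem comp_eq_id [HasEqualizers D] [HasEqualizers D'] {k : Y ⟶ X} {k' : Y' ⟶ X'}
    (hq : IsPresentation z t₀ t₁ q) (hq' : IsPresentation z' t₀ t₁ q')
    (h : HaveCommonLift q r q' r' f f') (hk : HaveCommonLift r q r' q' k k')
    (hfk : f ≫ k = 𝟙 X) : f' ≫ k' = 𝟙 X' :=
  (eq_iff hq.isCover hq'.isCover hq hq' (h.comp hk) id).1 hfk

end HaveCommonLift

/-- Lift `q ≫ f` to `g : A ⟶ B` by projectivity; `z'.map g ≫ r'` then descends along `q'`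
because `r` and `r'` present the same span. -/
theorem exists_haveCommonLift [RegularCat D] [RegularCat D'] [z.Full] [z'.Full]
    (hz : z.IsProjectiveCovering) (hz' : z'.IsProjectiveCovering) {q : z.obj A ⟶ X}
    {r : z.obj B ⟶ Y} {q' : z'.obj A ⟶ X'} {r' : z'.obj B ⟶ Y'}
    (hq : IsPresentation z t₀ t₁ q) (hr : IsPresentation z s₀ s₁ r)
    (hq' : IsPresentation z' t₀ t₁ q') (hr' : IsPresentation z' s₀ s₁ r') (f : X ⟶ Y) :
    ∃ f' : X' ⟶ Y', HaveCommonLift q r q' r' f f' := by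
  obtain ⟨g, hg⟩ := hz.exists_map_comp_eq hr.isCover (q ≫ f)
  have hw : z'.map t₀ ≫ z'.map g ≫ r' = z'.map t₁ ≫ z'.map g ≫ r' := by
    simp only [← Category.assoc, ← z'.map_comp]
    rw [← hr.map_comp_eq_iff_map_comp_eq hr']
    simp only [z.map_comp, Category.assoc, hg, reassoc_of% hq.w]
  obtain ⟨f', hf'⟩ := hq'.desc hz' _ hw
  exact ⟨f', g, hg, hf'.symm⟩

end Transfer

section TransferFunctor

variable {P : Type*} [Category P] {D : Type*} [Category D] {D' : Type*} [Category D']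
  [RegularCat D] [ExactCat D'] {z : P ⥤ D} {z' : P ⥤ D'} [z.Full] [z.Faithful] [z'.Full]
  [z'.Faithful] (hz : z.IsProjectiveCovering) (hz' : z'.IsProjectiveCovering) {X Y : D}

noncomputable def chosenPresentation (X : D) : Presentation z X :=
  (Presentation.nonempty hz X).some

noncomputable def transferObj (X : D) :
    PresentedObject z' (chosenPresentation hz X).t₀ (chosenPresentation hz X).t₁ :=
  (PresentedObject.nonempty hz' _ _ (chosenPresentation hz X).isPresentation.equivalence).some

theorem exists_transferMap (f : X ⟶ Y) :
    ∃ f', HaveCommonLift (chosenPresentation hz X).q (chosenPresentation hz Y).q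
      (transferObj hz hz' X).q (transferObj hz hz' Y).q f f' :=
  exists_haveCommonLift hz hz' (chosenPresentation hz X).isPresentation
    (chosenPresentation hz Y).isPresentation (transferObj hz hz' X).isPresentation
    (transferObj hz hz' Y).isPresentation f

noncomputable def transferMap (f : X ⟶ Y) :
    (transferObj hz hz' X).obj ⟶ (transferObj hz hz' Y).obj :=
  (exists_transferMap hz hz' f).choose

theorem haveCommonLift_transferMap (f : X ⟶ Y) :
    HaveCommonLift (chosenPresentation hz X).q (chosenPresentation hz Y).q
      (transferObj hz hz' X).q (transferObj hz hz' Y).q f (transferMap hz hz' f) :=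
  (exists_transferMap hz hz' f).choose_spec

theorem eq_iff_of_haveCommonLift {f k : X ⟶ Y}
    {f' k' : (transferObj hz hz' X).obj ⟶ (transferObj hz hz' Y).obj}
    (h : HaveCommonLift (chosenPresentation hz X).q (chosenPresentation hz Y).q
      (transferObj hz hz' X).q (transferObj hz hz' Y).q f f')
    (hk : HaveCommonLift (chosenPresentation hz X).q (chosenPresentation hz Y).q
      (transferObj hz hz' X).q (transferObj hz hz' Y).q k k') : f = k ↔ f' = k' :=
  HaveCommonLift.eq_iff (chosenPresentation hz X).isPresentation.isCover
    (transferObj hz hz' X).isPresentation.isCover (chosenPresentation hz Y).isPresentation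
    (transferObj hz hz' Y).isPresentation h hk

noncomputable def transfer : D ⥤ D' where
  obj X := (transferObj hz hz' X).obj
  map f := transferMap hz hz' f
  map_id X := (eq_iff_of_haveCommonLift hz hz' (haveCommonLift_transferMap hz hz' (𝟙 X))
    HaveCommonLift.id).1 rfl
  map_comp f g := (eq_iff_of_haveCommonLift hz hz' (haveCommonLift_transferMap hz hz' (f ≫ g))
    ((haveCommonLift_transferMap hz hz' f).comp (haveCommonLift_transferMap hz hz' g))).1 rfl

theorem transfer_faithful : (transfer hz hz').Faithful :=
  ⟨fun h => (eq_iff_of_haveCommonLift hz hz' (haveCommonLift_transferMap hz hz' _)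
    (haveCommonLift_transferMap hz hz' _)).2 h⟩

theorem transfer_full : (transfer hz hz').Full := by
  refine ⟨fun {X Y} φ => ?_⟩
  obtain ⟨f, hf⟩ := exists_haveCommonLift hz' hz (transferObj hz hz' X).isPresentation
    (transferObj hz hz' Y).isPresentation (chosenPresentation hz X).isPresentation
    (chosenPresentation hz Y).isPresentation φ
  exact ⟨f, (eq_iff_of_haveCommonLift hz hz' (haveCommonLift_transferMap hz hz' f) hf.symm).1 rfl⟩

end TransferFunctor

section Equivalence

variable {P : Type*} [Category P] {D : Type*} [Category D] {D' : Type*} [Category D']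
  [ExactCat D] [ExactCat D'] {z : P ⥤ D} {z' : P ⥤ D'} [z.Full] [z.Faithful] [z'.Full]
  [z'.Faithful]

/-- An object `Z'` of `D'` is presented by some span; its quotient `X` in `D` has two
presentations, and comparing them through `𝟙 X` yields `transfer.obj X ≅ Z'`. -/
theorem transfer_essSurj (hz : z.IsProjectiveCovering) (hz' : z'.IsProjectiveCovering) :
    (transfer hz hz').EssSurj := by
  refine ⟨fun Z' => ?_⟩
  obtain ⟨p'⟩ := Presentation.nonempty hz' Z'
  obtain ⟨X, q, hq⟩ := PresentedObject.nonempty hz p'.t₀ p'.t₁ p'.isPresentation.equivalence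
  obtain ⟨f', hf'⟩ := exists_haveCommonLift hz hz' (chosenPresentation hz X).isPresentation hq
    (transferObj hz hz' X).isPresentation p'.isPresentation (𝟙 X)
  obtain ⟨k', hk'⟩ := exists_haveCommonLift hz hz' hq (chosenPresentation hz X).isPresentation
    p'.isPresentation (transferObj hz hz' X).isPresentation (𝟙 X)
  exact ⟨X, ⟨⟨f', k',
    hf'.comp_eq_id (chosenPresentation hz X).isPresentation (transferObj hz hz' X).isPresentation
      hk' (Category.comp_id _),
    hk'.comp_eq_id hq p'.isPresentation hf' (Category.comp_id _)⟩⟩⟩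

theorem nonempty_equivalence_of_isProjectiveCovering (hz : z.IsProjectiveCovering)
    (hz' : z'.IsProjectiveCovering) : Nonempty (D ≌ D') :=
  have : (transfer hz hz').IsEquivalence :=
    { faithful := transfer_faithful hz hz'
      full := transfer_full hz hz'
      essSurj := transfer_essSurj hz hz' }
  ⟨(transfer hz hz').asEquivalence⟩

end Equivalence

theorem exReg_equiv_exLex_of_projectives_general
    {C : Type u} [Category.{v} C] {D : Type u₂} [Category.{v₂} D]
    {D' : Type u₃} [Category.{v₃} D']
    [RegularCat C] [ExactCat D] [ExactCat D']
    (hep : HasEnoughCovProjectives C)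
    -- y : C ⥤ D exhibits D as the ex/reg-completion of C
    (y : C ⥤ D) [y.Full] [y.Faithful]
    (hylex : PreservesFiniteLimits y)
    (hycov : ∀ {X Y : C} (f : Y ⟶ X), IsCover f → IsCover (y.map f))
    (hycovering : ∀ Z : D, ∃ (A : C) (c : y.obj A ⟶ Z), IsCover c)
    -- y' : Proj(C) ⥤ D' exhibits D' as the ex/lex-completion of Proj(C)
    (y' : ObjectProperty.FullSubcategory (fun X : C => CovProjective X) ⥤ D') [y'.Full] [y'.Faithful]
    (hy'covering : ∀ Z : D', ∃ (A : ObjectProperty.FullSubcategory (fun X : C => CovProjective X))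
      (c : y'.obj A ⟶ Z), IsCover c)
    (hy'proj : ∀ A : ObjectProperty.FullSubcategory (fun X : C => CovProjective X),
      CovProjective (y'.obj A)) :
    Nonempty (D ≌ D') := by
  have := hylex
  have hz : (ObjectProperty.ι (fun X : C => CovProjective X) ⋙ y).IsProjectiveCovering :=
    { covProjective_obj := fun A => A.property.map y hycovering
      exists_cover := fun X => by
        obtain ⟨A, c, hc⟩ := hycovering X
        obtain ⟨P, p, hP, hp⟩ := hep A
        exact ⟨⟨P, hP⟩, y.map p ≫ c, (hycov p hp).comp hc⟩ }
  exact nonempty_equivalence_of_isProjectiveCovering hz ⟨hy'proj, hy'covering⟩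

/-- If C is a regular category with enough projectives, whose projectives are
closed under finite limits, then the ex/reg-completion of C (an exact D with a
regular, fully faithful, covering, full-on-subobjects embedding y) is
equivalent to the ex/lex-completion of the full subcategory Proj(C) of
projectives (an exact D' with a finite-limit-preserving, fully faithful,
covering embedding y' whose image consists, up to isomorphism, of the
projectives of D'). -/
theorem exReg_equiv_exLex_of_projectives
    {C : Type u} [Category.{v} C] {D : Type u₂} [Category.{v₂} D]
    {D' : Type u₃} [Category.{v₃} D']
    [RegularCat C] [ExactCat D] [ExactCat D']
    (hep : HasEnoughCovProjectives C)
    (hprojlim : ∀ (J : Type) [SmallCategory J] [FinCategory J] (F : J ⥤ C),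
      (∀ j : J, CovProjective (F.obj j)) → CovProjective (limit F))
    -- y : C ⥤ D exhibits D as the ex/reg-completion of C
    (y : C ⥤ D) [y.Full] [y.Faithful]
    (hylex : PreservesFiniteLimits y)
    (hycov : ∀ {X Y : C} (f : Y ⟶ X), IsCover f → IsCover (y.map f))
    (hycovering : ∀ Z : D, ∃ (A : C) (c : y.obj A ⟶ Z), IsCover c)
    (hyfullsub : ∀ (A : C) (S : D) (m : S ⟶ y.obj A), Mono m →
      ∃ (B : C) (n : B ⟶ A), Mono n ∧ ∃ e : y.obj B ≅ S, e.hom ≫ m = y.map n)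
    -- y' : Proj(C) ⥤ D' exhibits D' as the ex/lex-completion of Proj(C)
    (y' : ObjectProperty.FullSubcategory (fun X : C => CovProjective X) ⥤ D') [y'.Full] [y'.Faithful]
    (hy'lex : PreservesFiniteLimits y')
    (hy'covering : ∀ Z : D', ∃ (A : ObjectProperty.FullSubcategory (fun X : C => CovProjective X))
      (c : y'.obj A ⟶ Z), IsCover c)
    (hy'proj : ∀ A : ObjectProperty.FullSubcategory (fun X : C => CovProjective X),
      CovProjective (y'.obj A))
    (hy'projonto : ∀ Q : D', CovProjective Q →
      ∃ A : ObjectProperty.FullSubcategory (fun X : C => CovProjective X), Nonempty (y'.obj A ≅ Q)) :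
    Nonempty (D ≌ D') :=
  exReg_equiv_exLex_of_projectives_general hep y hylex hycov hycovering y' hy'covering hy'proj
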